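/- Let R = ℂ[x₀,…,x₅]/(x₀²,…,x₅²), let S¹ ⊂ R denote the image of the space of homogeneous linear forms, let ζ ≠ ζ′ be complex numbers with ζ³ = ζ′³ = −1, and set p_ζ = (x₀ + ζx₁)(x₂ + ζx₃)(x₄ + ζx₅) and p_ζ′ = (x₀ + ζ′x₁)(x₂ + ζ′x₃)(x₄ + ζ′x₅) in R. Then the two subspaces S¹·p_ζ and S¹·p_ζ′ of the degree-4 component of R have trivial intersection: S¹·p_ζ ∩ S¹·p_ζ′ = {0}. -/

import Mathlib

open MvPolynomial

noncomputable section

/-- The Jacobian ideal of the Fermat cubic fourfold `x₀³ + ⋯ + x₅³`,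
generated by the squares of the six variables. -/
def fermatJacIdeal : Ideal (MvPolynomial (Fin 6) ℂ) :=
  Ideal.span (Set.range fun i : Fin 6 => (X i : MvPolynomial (Fin 6) ℂ) ^ 2)

/-- The Jacobian ring `R = ℂ[x₀,…,x₅]/(x₀²,…,x₅²)` of the Fermat cubic fourfold. -/
abbrev FermatJacRing := MvPolynomial (Fin 6) ℂ ⧸ fermatJacIdeal

/-- The quotient map `ℂ[x₀,…,x₅] → R`. -/
def fermatπ : MvPolynomial (Fin 6) ℂ →ₐ[ℂ] FermatJacRing :=
  Ideal.Quotient.mkₐ ℂ fermatJacIdeal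

/-- The degree-`d` graded component of `R`. -/
def fermatDeg (d : ℕ) : Submodule ℂ FermatJacRing :=
  (homogeneousSubmodule (Fin 6) ℂ d).map fermatπ.toLinearMap

/-- The class `p_ζ = (x₀+ζx₁)(x₂+ζx₃)(x₄+ζx₅)` in `R`. -/
def fermatPlaneClass (ζ : ℂ) : FermatJacRing :=
  fermatπ ((X 0 + C ζ * X 1) * (X 2 + C ζ * X 3) * (X 4 + C ζ * X 5))

/-!
Write a linear form as `ℓ = ∑ aᵢxᵢ`. Since `xᵢ² = 0`, `(a₀x₀ + a₁x₁)(x₀ + ζx₁) = (a₀ζ + a₁)x₀x₁`,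
so `ℓ·p_ζ = ∑ₖ λₖ(ℓ, ζ)·uₖ(ζ)`, where `uₖ(ζ)` is `p_ζ` with its `k`-th factor replaced by the
product of its two variables. Killing all variables outside suitable sets of four turns `ℓ·p_ζ`
into `λₖ(ℓ, ζ)` resp. `ζ·λₖ(ℓ, ζ)` times a squarefree monomial, and squarefree monomials are
nonzero in `R`. Hence `ℓ·p_ζ = m·p_ζ'` forces `λₖ(ℓ, ζ) = λₖ(m, ζ')` and
`ζ·λₖ(ℓ, ζ) = ζ'·λₖ(m, ζ')`, so all `λₖ(ℓ, ζ)` vanish when `ζ ≠ ζ'`, and then `ℓ·p_ζ = 0`.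
-/

namespace MvPolynomial

variable {σ R : Type*} [CommSemiring R]

theorem prod_X_notMem_span_X_sq [Nontrivial R] (s : Finset σ) :
    ∏ i ∈ s, (X i : MvPolynomial σ R) ∉ Ideal.span (Set.range fun i => X i ^ 2) := by
  classical
  have hgen : Set.range (fun i => (X i : MvPolynomial σ R) ^ 2) =
      (fun m => monomial m 1) '' Set.range fun i => Finsupp.single i 2 := by
    rw [← Set.range_comp]
    simp only [Function.comp_def, X_pow_eq_monomial]
  have hprod : ∏ i ∈ s, (X i : MvPolynomial σ R) = monomial (∑ i ∈ s, Finsupp.single i 1) 1 := by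
    rw [monomial_sum_one]
    rfl
  rw [hgen, mem_ideal_span_monomial_image, hprod, support_monomial, if_neg one_ne_zero]
  intro h
  obtain ⟨_, ⟨j, rfl⟩, hj⟩ := h _ (Finset.mem_singleton_self _)
  have hj := hj j
  simp only [Finsupp.single_eq_same, Finsupp.finsetSum_apply, Finsupp.single_apply,
    Finset.sum_ite_eq'] at hj
  split_ifs at hj <;> omega

theorem span_X_sq_le_comap_aeval_ite (s : Set σ) [DecidablePred (· ∈ s)] :
    Ideal.span (Set.range fun i => (X i : MvPolynomial σ R) ^ 2) ≤
      (Ideal.span (Set.range fun i => X i ^ 2)).comap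
        (aeval fun i => if i ∈ s then X i else 0 : MvPolynomial σ R →ₐ[R] MvPolynomial σ R) := by
  refine Ideal.span_le.mpr ?_
  rintro _ ⟨i, rfl⟩
  simp only [SetLike.mem_coe, Ideal.mem_comap, map_pow, aeval_X]
  split_ifs
  · exact Ideal.subset_span ⟨i, rfl⟩
  · simp

end MvPolynomial

theorem add_smul_mul_add_smul_of_mul_self_eq_zero {K A : Type*} [CommSemiring K]
    [CommSemiring A] [Algebra K A] {x y : A} (hx : x * x = 0) (hy : y * y = 0) (a b z : K) :
    (a • x + b • y) * (x + z • y) = (a * z + b) • (x * y) := by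
  simp only [add_mul, mul_add, smul_mul_assoc, mul_smul_comm, hx, hy, smul_zero, smul_smul,
    add_smul, mul_comm y x, zero_add, add_zero]
  rw [add_comm, mul_comm z a]

def fermatX (i : Fin 6) : FermatJacRing := fermatπ (X i)

theorem fermatX_mul_self (i : Fin 6) : fermatX i * fermatX i = 0 := by
  rw [fermatX, ← map_mul, ← sq, fermatπ, Ideal.Quotient.mkₐ_eq_mk, Ideal.Quotient.eq_zero_iff_mem]
  exact Ideal.subset_span ⟨i, rfl⟩

theorem prod_fermatX_ne_zero (s : Finset (Fin 6)) : ∏ i ∈ s, fermatX i ≠ 0 := by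
  simp only [fermatX, ← map_prod, fermatπ, Ideal.Quotient.mkₐ_eq_mk, ne_eq,
    Ideal.Quotient.eq_zero_iff_mem]
  exact prod_X_notMem_span_X_sq s

theorem fermatDeg_one : fermatDeg 1 = Submodule.span ℂ (Set.range fermatX) := by
  rw [fermatDeg, homogeneousSubmodule_one_eq_span_X, Submodule.map_span, ← Set.range_comp]
  rfl

theorem fermatPlaneClass_eq (ζ : ℂ) :
    fermatPlaneClass ζ =
      (fermatX 0 + ζ • fermatX 1) * (fermatX 2 + ζ • fermatX 3) * (fermatX 4 + ζ • fermatX 5) := by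
  simp [fermatPlaneClass, fermatX, C_mul']

def fermatRestrict (s : Finset (Fin 6)) : FermatJacRing →ₐ[ℂ] FermatJacRing :=
  Ideal.quotientMapₐ _ _ (span_X_sq_le_comap_aeval_ite (s : Set (Fin 6)))

theorem fermatRestrict_fermatX (s : Finset (Fin 6)) (i : Fin 6) :
    fermatRestrict s (fermatX i) = if i ∈ s then fermatX i else 0 := by
  by_cases h : i ∈ s <;> simp [fermatRestrict, fermatX, fermatπ, h]

def planeCoeff (a : Fin 6 → ℂ) (ζ : ℂ) : Fin 3 → ℂ :=
  ![a 0 * ζ + a 1, a 2 * ζ + a 3, a 4 * ζ + a 5]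

def planeTerm (ζ : ℂ) : Fin 3 → FermatJacRing :=
  ![fermatX 0 * fermatX 1 * (fermatX 2 + ζ • fermatX 3) * (fermatX 4 + ζ • fermatX 5),
    fermatX 2 * fermatX 3 * (fermatX 0 + ζ • fermatX 1) * (fermatX 4 + ζ • fermatX 5),
    fermatX 4 * fermatX 5 * (fermatX 0 + ζ • fermatX 1) * (fermatX 2 + ζ • fermatX 3)]

theorem linear_mul_fermatPlaneClass (a : Fin 6 → ℂ) (ζ : ℂ) :
    (∑ i, a i • fermatX i) * fermatPlaneClass ζ = ∑ k, planeCoeff a ζ k • planeTerm ζ k := by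
  have pair (i j : Fin 6) := add_smul_mul_add_smul_of_mul_self_eq_zero
    (fermatX_mul_self i) (fermatX_mul_self j) (a i) (a j) ζ
  set e : Fin 6 → Fin 6 → FermatJacRing := fun i j => fermatX i + ζ • fermatX j
  set ℓ : Fin 6 → Fin 6 → FermatJacRing := fun i j => a i • fermatX i + a j • fermatX j
  calc (∑ i, a i • fermatX i) * fermatPlaneClass ζ
      = ℓ 0 1 * e 0 1 * e 2 3 * e 4 5 + ℓ 2 3 * e 2 3 * e 0 1 * e 4 5
          + ℓ 4 5 * e 4 5 * e 0 1 * e 2 3 := by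
        rw [fermatPlaneClass_eq, Fin.sum_univ_six]
        ring
    _ = ∑ k, planeCoeff a ζ k • planeTerm ζ k := by
        simp only [ℓ, e, pair, Fin.sum_univ_three, planeCoeff, planeTerm, smul_mul_assoc]
        rfl

/- Each set contains both variables of the `k`-th pair but only one of every other pair, and the
`j`-th plane term is divisible by both variables of the `j`-th pair. -/
def readoutSet₁ : Fin 3 → Finset (Fin 6) := ![{0, 1, 2, 4}, {0, 2, 3, 4}, {0, 2, 4, 5}]

def readoutSet₂ : Fin 3 → Finset (Fin 6) := ![{0, 1, 3, 4}, {1, 2, 3, 4}, {1, 2, 4, 5}]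

theorem fermatRestrict_readoutSet₁_planeTerm (ζ : ℂ) (k j : Fin 3) :
    fermatRestrict (readoutSet₁ k) (planeTerm ζ j) =
      if j = k then ∏ i ∈ readoutSet₁ k, fermatX i else 0 := by
  fin_cases k <;> fin_cases j <;> simp [readoutSet₁, planeTerm, fermatRestrict_fermatX] <;> ring

theorem fermatRestrict_readoutSet₂_planeTerm (ζ : ℂ) (k j : Fin 3) :
    fermatRestrict (readoutSet₂ k) (planeTerm ζ j) =
      if j = k then ζ • ∏ i ∈ readoutSet₂ k, fermatX i else 0 := by
  fin_cases k <;> fin_cases j <;>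
    simp [readoutSet₂, planeTerm, fermatRestrict_fermatX, smul_mul_assoc, mul_smul_comm] <;>
    ring_nf

theorem fermatRestrict_readoutSet₁_linear_mul (a : Fin 6 → ℂ) (ζ : ℂ) (k : Fin 3) :
    fermatRestrict (readoutSet₁ k) ((∑ i, a i • fermatX i) * fermatPlaneClass ζ) =
      planeCoeff a ζ k • ∏ i ∈ readoutSet₁ k, fermatX i := by
  rw [linear_mul_fermatPlaneClass, map_sum]
  simp [fermatRestrict_readoutSet₁_planeTerm]

theorem fermatRestrict_readoutSet₂_linear_mul (a : Fin 6 → ℂ) (ζ : ℂ) (k : Fin 3) :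
    fermatRestrict (readoutSet₂ k) ((∑ i, a i • fermatX i) * fermatPlaneClass ζ) =
      (ζ * planeCoeff a ζ k) • ∏ i ∈ readoutSet₂ k, fermatX i := by
  rw [linear_mul_fermatPlaneClass, map_sum]
  simp [fermatRestrict_readoutSet₂_planeTerm, smul_smul, mul_comm]

theorem planeCoeff_eq_zero_of_linear_mul_eq {ζ ζ' : ℂ} (hne : ζ ≠ ζ') {a b : Fin 6 → ℂ}
    (h : (∑ i, a i • fermatX i) * fermatPlaneClass ζ =
      (∑ i, b i • fermatX i) * fermatPlaneClass ζ') (k : Fin 3) :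
    planeCoeff a ζ k = 0 := by
  have h₁ := congrArg (fermatRestrict (readoutSet₁ k)) h
  have h₂ := congrArg (fermatRestrict (readoutSet₂ k)) h
  rw [fermatRestrict_readoutSet₁_linear_mul, fermatRestrict_readoutSet₁_linear_mul] at h₁
  rw [fermatRestrict_readoutSet₂_linear_mul, fermatRestrict_readoutSet₂_linear_mul] at h₂
  have e₁ := smul_left_injective ℂ (prod_fermatX_ne_zero _) h₁
  have e₂ := smul_left_injective ℂ (prod_fermatX_ne_zero _) h₂
  have : (ζ - ζ') * planeCoeff a ζ k = 0 := by linear_combination e₂ - ζ' * e₁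
  exact (mul_eq_zero.mp this).resolve_left (sub_ne_zero.mpr hne)

theorem fermat_plane_classes_trivial_intersection_general
    (ζ ζ' : ℂ) (hne : ζ ≠ ζ') :
    (fermatDeg 1).map (LinearMap.mulRight ℂ (fermatPlaneClass ζ))
      ⊓ (fermatDeg 1).map (LinearMap.mulRight ℂ (fermatPlaneClass ζ')) = ⊥ := by
  refine (Submodule.eq_bot_iff _).mpr fun v hv => ?_
  simp only [Submodule.mem_inf, Submodule.mem_map, fermatDeg_one,
    Submodule.mem_span_range_iff_exists_fun, LinearMap.mulRight_apply] at hv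
  obtain ⟨⟨_, ⟨a, rfl⟩, rfl⟩, ⟨_, ⟨b, rfl⟩, hba⟩⟩ := hv
  simp [linear_mul_fermatPlaneClass, planeCoeff_eq_zero_of_linear_mul_eq hne hba.symm]

/-- The subspaces `S¹·p_ζ` and `S¹·p_ζ'` of the degree-4 component of
`R = ℂ[x₀,…,x₅]/(x₀²,…,x₅²)` have trivial intersection, where `ζ ≠ ζ'`,
`ζ³ = ζ'³ = -1`, and `S¹` is the image of the space of linear forms. -/
theorem fermat_plane_classes_trivial_intersection
    (ζ ζ' : ℂ) (hζ : ζ ^ 3 = -1) (hζ' : ζ' ^ 3 = -1) (hne : ζ ≠ ζ') :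
    (fermatDeg 1).map (LinearMap.mulRight ℂ (fermatPlaneClass ζ))
      ⊓ (fermatDeg 1).map (LinearMap.mulRight ℂ (fermatPlaneClass ζ')) = ⊥ :=
  fermat_plane_classes_trivial_intersection_general ζ ζ' hne
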